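/- If P is a parallelohedron in ℝⁿ tiling by a lattice Λ, then the chromatic number of the unit distance graph of (ℝⁿ, ‖·‖_P) is at most 2ⁿ: the 2ⁿ sets A_H = ⋃_{λ∈H} B_P(λ, 1/2), for H a coset of Λ in (1/2)Λ, partition ℝⁿ and each avoids distance 1. -/

import Mathlib

open MeasureTheory Filter Set Pointwise

noncomputable def box (n : ℕ) (R : ℝ) : Set (Fin n → ℝ) := {x | ∀ i, |x i| ≤ R}

noncomputable def density (n : ℕ) (A : Set (Fin n → ℝ)) : ℝ :=
  Filter.limsup (fun R : ℝ =>
    (volume (A ∩ box n R)).toReal / (volume (box n R)).toReal) Filter.atTop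

def AvoidsOne (n : ℕ) (N : (Fin n → ℝ) → ℝ) (A : Set (Fin n → ℝ)) : Prop :=
  ∀ x ∈ A, ∀ y ∈ A, N (x - y) ≠ 1

noncomputable def m1 (n : ℕ) (N : (Fin n → ℝ) → ℝ) : ℝ :=
  sSup {d : ℝ | ∃ A : Set (Fin n → ℝ), MeasurableSet A ∧ AvoidsOne n N A ∧ d = density n A}

noncomputable def polyNorm (n : ℕ) (P : Set (Fin n → ℝ)) (x : Fin n → ℝ) : ℝ :=
  sInf {l : ℝ | 0 ≤ l ∧ x ∈ l • P}

def IsSymmPolytope (n : ℕ) (P : Set (Fin n → ℝ)) : Prop :=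
  Convex ℝ P ∧ (∀ x ∈ P, -x ∈ P) ∧ ∃ F : Finset (Fin n → ℝ), P = convexHull ℝ (↑F : Set (Fin n → ℝ))

def TilesBy (n : ℕ) (P : Set (Fin n → ℝ)) (Λ : Set (Fin n → ℝ)) : Prop :=
  (⋃ l ∈ Λ, (l +ᵥ P)) = Set.univ ∧
  (Λ.Pairwise fun a b => interior (a +ᵥ P) ∩ interior (b +ᵥ P) = ∅)

open Topology Module

/-!
Color `x` by the parities of the coordinates, in the basis `b`, of a lattice point `l` with
`2x ∈ l + P`. If `x` and `y` get the same color, then `2x - 2y = 2μ + (a - c)` with `μ ∈ Λ` and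
`a, c ∈ P`. The tiling forces `‖μ‖_P ≥ 2` when `μ ≠ 0`, so `‖x - y‖_P = 1` is only possible if
`‖a - c‖_P = 2`, i.e. if `a` and `-c` lie on a common face of `P`. This is excluded by taking the
representatives in the half-open cell `interiorAlong P g` of points that enter the interior of `P`
when pushed slightly along a fixed direction `g`; choosing `g` parallel to no proper face of `P`
ensures that every point of `ℝⁿ` still has such a representative.
-/

theorem polyNorm_eq_gauge {n : ℕ} {P : Set (Fin n → ℝ)} (h0 : (0 : Fin n → ℝ) ∈ P) :
    polyNorm n P = gauge P := by
  funext x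
  rcases eq_or_ne x 0 with rfl | hx
  · have : {l : ℝ | 0 ≤ l ∧ (0 : Fin n → ℝ) ∈ l • P} = Ici 0 :=
      Set.ext fun l => and_iff_left ⟨0, h0, smul_zero l⟩
    rw [polyNorm, this, csInf_Ici, gauge_zero]
  · rw [polyNorm, gauge]
    congr 1
    ext l
    refine ⟨fun ⟨hl, hm⟩ => ⟨hl.lt_of_ne ?_, hm⟩, fun ⟨hl, hm⟩ => ⟨hl.le, hm⟩⟩
    rintro rfl
    exact hx (by simpa [zero_smul_set ⟨0, h0⟩] using hm)

section ConvexBody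

variable {E : Type*} [NormedAddCommGroup E] [NormedSpace ℝ E]

def IsGenericDirection (F : Set E) (g : E) : Prop :=
  ∀ S ⊆ F, g ∈ vectorSpan ℝ S → vectorSpan ℝ S = ⊤

theorem exists_isGenericDirection {F : Set E} (hF : F.Finite) : ∃ g, IsGenericDirection F g := by
  by_contra! h
  simp only [IsGenericDirection, not_forall] at h
  let ι := {S : Set E // S ⊆ F ∧ vectorSpan ℝ S ≠ ⊤}
  have : Finite ι := (hF.finite_subsets.subset fun _ hS => hS.1).to_subtype
  have hcover : ⋃ S : ι, (vectorSpan ℝ S.1 : Set E) = univ :=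
    eq_univ_of_forall fun g => by
      obtain ⟨S, hSF, hgS, hS⟩ := h g
      exact mem_iUnion.mpr ⟨⟨S, hSF, hS⟩, hgS⟩
  obtain ⟨S, hS⟩ := Subspace.exists_eq_top_of_iUnion_eq_univ hcover
  exact S.2.2 hS

theorem toExposed_convexHull_subset {F : Set E} (hF : F.Finite) (f : StrongDual ℝ E) :
    f.toExposed (convexHull ℝ F) ⊆ convexHull ℝ (F ∩ f.toExposed (convexHull ℝ F)) := by
  set B := f.toExposed (convexHull ℝ F)
  have hB : IsExposed ℝ (convexHull ℝ F) B := ContinuousLinearMap.toExposed.isExposed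
  have hext : B.extremePoints ℝ ⊆ F ∩ B := by
    rw [hB.isExtreme.extremePoints_eq]
    exact fun x hx => ⟨extremePoints_convexHull_subset hx.2, hx.1⟩
  calc B = closure (convexHull ℝ (B.extremePoints ℝ)) :=
        (closure_convexHull_extremePoints (hB.isCompact (hF.isCompact_convexHull (𝕜 := ℝ)))
          (hB.convex (convex_convexHull ℝ F))).symm
    _ ⊆ closure (convexHull ℝ (F ∩ B)) := closure_mono (convexHull_mono hext)
    _ = convexHull ℝ (F ∩ B) :=
        ((hF.subset inter_subset_left).isCompact_convexHull (𝕜 := ℝ)).isClosed.closure_eq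

theorem IsGenericDirection.add_smul_mem_interior_convexHull {F : Set E} (hF : F.Finite)
    (hint : (interior (convexHull ℝ F)).Nonempty) {g : E} (hg : IsGenericDirection F g)
    {a : E} {t s : ℝ} (ha : a ∈ convexHull ℝ F) (hat : a + t • g ∈ convexHull ℝ F)
    (hs : s ∈ Ioo 0 t) : a + s • g ∈ interior (convexHull ℝ F) := by
  set P := convexHull ℝ F
  by_contra hq
  obtain ⟨f, hf⟩ := geometric_hahn_banach_open_point (convex_convexHull ℝ F).interior
    isOpen_interior hq
  have hle : ∀ y ∈ P, f y ≤ f (a + s • g) := by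
    refine fun y hy => closure_minimal (fun z hz => (hf z hz).le)
      (isClosed_le f.continuous continuous_const) ?_
    rwa [(convex_convexHull ℝ F).closure_interior_eq_closure_of_nonempty_interior hint,
      (hF.isCompact_convexHull (𝕜 := ℝ)).isClosed.closure_eq]
  have h1 := hle a ha
  have h2 := hle _ hat
  simp only [map_add, map_smul, smul_eq_mul] at h1 h2
  have hfg : f g = 0 := by nlinarith [hs.1, hs.2]
  have hexp : a ∈ f.toExposed P ∧ a + t • g ∈ f.toExposed P := by
    refine ⟨⟨ha, fun y hy => ?_⟩, ⟨hat, fun y hy => ?_⟩⟩ <;>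
      simpa [hfg] using hle y hy
  set S := F ∩ f.toExposed P
  have hgS : g ∈ vectorSpan ℝ S := by
    have hspan := convexHull_subset_affineSpan (𝕜 := ℝ) S
    have := AffineSubspace.vsub_mem_direction
      (hspan (toExposed_convexHull_subset hF f hexp.2))
      (hspan (toExposed_convexHull_subset hF f hexp.1))
    rw [direction_affineSpan, vsub_eq_sub, add_sub_cancel_left] at this
    exact (Submodule.smul_mem_iff _ (hs.1.trans hs.2).ne').mp this
  have hker : vectorSpan ℝ S ≤ LinearMap.ker (f : E →ₗ[ℝ] ℝ) := by
    rw [vectorSpan_def, Submodule.span_le]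
    rintro _ ⟨x, ⟨-, hxP, hx⟩, y, ⟨-, hyP, hy⟩, rfl⟩
    simp [le_antisymm (hy x hxP) (hx y hyP)]
  rw [hg S inter_subset_left hgS, top_le_iff, LinearMap.ker_eq_top] at hker
  obtain ⟨x, hx⟩ := hint
  have hf0 : ∀ z, f z = 0 := LinearMap.congr_fun hker
  exact (hf x hx).ne (by rw [hf0, hf0])

def interiorAlong (P : Set E) (g : E) : Set E :=
  {a | ∀ᶠ t in 𝓝[>] (0 : ℝ), a + t • g ∈ interior P}

theorem mem_interiorAlong {P : Set E} {g a : E} :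
    a ∈ interiorAlong P g ↔ ∀ᶠ t in 𝓝[>] (0 : ℝ), a + t • g ∈ interior P :=
  Iff.rfl

theorem IsGenericDirection.exists_sub_mem_interiorAlong [FiniteDimensional ℝ E] {F : Set E}
    (hF : F.Finite) (hint : (interior (convexHull ℝ F)).Nonempty) {g : E}
    (hg : IsGenericDirection F g) {Λ : AddSubgroup E} [DiscreteTopology Λ]
    (hcover : ⋃ l ∈ (Λ : Set E), l +ᵥ convexHull ℝ F = univ) (w : E) :
    ∃ l ∈ Λ, w - l ∈ interiorAlong (convexHull ℝ F) g := by
  set P := convexHull ℝ F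
  have hPc : IsCompact P := hF.isCompact_convexHull (𝕜 := ℝ)
  set K := (fun p : ℝ × E => w + p.1 • g - p.2) '' (Icc 0 1 ×ˢ P)
  have hK : (K ∩ Λ).Finite := Metric.finite_isBounded_inter_isClosed DiscreteTopology.isDiscrete
    ((isCompact_Icc.prod hPc).image (by fun_prop)).isBounded AddSubgroup.isClosed_of_discrete
  have hev : ∀ᶠ t in 𝓝[>] (0 : ℝ), ∃ l ∈ K ∩ Λ, w + t • g - l ∈ P := by
    filter_upwards [Ioo_mem_nhdsGT one_pos] with t ht
    obtain ⟨l, hl, hwl⟩ := mem_iUnion₂.mp (hcover ▸ mem_univ (w + t • g))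
    rw [mem_vadd_set_iff_neg_vadd_mem, vadd_eq_add, neg_add_eq_sub] at hwl
    exact ⟨l, ⟨⟨(t, w + t • g - l), ⟨Ioo_subset_Icc_self ht, hwl⟩, by simp⟩, hl⟩, hwl⟩
  -- only finitely many tiles meet `w + [0, 1] • g`, so one of them contains `w + t • g` for
  -- arbitrarily small `t > 0`
  obtain ⟨l, hl, hfreq⟩ : ∃ l ∈ K ∩ Λ, ∃ᶠ t in 𝓝[>] (0 : ℝ), w + t • g - l ∈ P := by
    by_contra! h
    obtain ⟨t, ⟨l, hl, ht⟩, ht'⟩ := (hev.and ((eventually_all_finite hK).mpr h)).exists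
    exact ht' l hl ht
  have hwl : w - l ∈ P := hPc.isClosed.mem_of_frequently_of_tendsto hfreq
    (tendsto_nhdsWithin_of_tendsto_nhds
      (by simpa using (by fun_prop : Continuous fun t : ℝ => w + t • g - l).tendsto 0))
  obtain ⟨t, ht, ht0⟩ := (hfreq.and_eventually self_mem_nhdsWithin).exists
  refine ⟨l, hl.2, ?_⟩
  filter_upwards [Ioo_mem_nhdsGT ht0] with s hs
  exact hg.add_smul_mem_interior_convexHull hF hint hwl (by rwa [sub_add_eq_add_sub]) hs

theorem zero_mem_interior_of_iUnion_vadd_eq_univ [CompleteSpace E] {P : Set E}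
    (hconv : Convex ℝ P) (hsymm : ∀ x ∈ P, -x ∈ P) (hclosed : IsClosed P) {Λ : Set E}
    (hΛ : Λ.Countable) (hcover : ⋃ l ∈ Λ, l +ᵥ P = univ) : (0 : E) ∈ interior P := by
  have := hΛ.to_subtype
  rw [biUnion_eq_iUnion] at hcover
  obtain ⟨l, x, hx⟩ := nonempty_interior_of_iUnion_of_closed
    (fun l : Λ => hclosed.vadd (l : E)) hcover
  rw [interior_vadd, mem_vadd_set_iff_neg_vadd_mem] at hx
  set p := -(l : E) +ᵥ x
  have hnp : -p ∈ interior P :=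
    interior_maximal (fun z hz => by simpa using hsymm _ (interior_subset hz))
      (isOpen_interior.preimage continuous_neg) (by simpa using hx)
  simpa using hconv.interior hx hnp (by norm_num : (0 : ℝ) ≤ 1 / 2)
    (by norm_num : (0 : ℝ) ≤ 1 / 2) (by norm_num)

theorem gauge_sub_lt_two_of_mem_interiorAlong {P : Set E} (hconv : Convex ℝ P)
    (hsymm : ∀ x ∈ P, -x ∈ P) (h0 : P ∈ 𝓝 0) {g a c : E} (ha : a ∈ interiorAlong P g)
    (hc : c ∈ interiorAlong P g) : gauge P (a - c) < 2 := by
  obtain ⟨t, hat, hct⟩ := (mem_interiorAlong.mp ha |>.and (mem_interiorAlong.mp hc)).exists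
  rw [← gauge_lt_one_iff_mem_interior hconv h0] at hat hct
  calc gauge P (a - c) = gauge P ((a + t • g) + -(c + t • g)) := by congr 1; abel
    _ ≤ gauge P (a + t • g) + gauge P (-(c + t • g)) :=
        gauge_add_le hconv (absorbent_nhds_zero h0) _ _
    _ < 1 + 1 := by rw [gauge_neg hsymm]; exact add_lt_add hat hct
    _ = 2 := one_add_one_eq_two

theorem two_le_gauge_of_mem_of_ne_zero {P : Set E} (hconv : Convex ℝ P)
    (hsymm : ∀ x ∈ P, -x ∈ P) (h0 : P ∈ 𝓝 0) {Λ : AddSubgroup E}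
    (hdisj : (Λ : Set E).Pairwise fun a b => interior (a +ᵥ P) ∩ interior (b +ᵥ P) = ∅)
    {l : E} (hl : l ∈ Λ) (hl0 : l ≠ 0) : 2 ≤ gauge P l := by
  by_contra! hlt
  have hm : gauge P ((2⁻¹ : ℝ) • l) < 1 := by
    rw [gauge_smul_of_nonneg (by norm_num), smul_eq_mul]
    linarith
  have hm' : (2⁻¹ : ℝ) • l ∈ interior (l +ᵥ P) := by
    rw [interior_vadd, mem_vadd_set_iff_neg_vadd_mem, vadd_eq_add,
      show -l + (2⁻¹ : ℝ) • l = -((2⁻¹ : ℝ) • l) by module,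
      ← gauge_lt_one_iff_mem_interior hconv h0, gauge_neg hsymm]
    exact hm
  rw [gauge_lt_one_iff_mem_interior hconv h0] at hm
  have hdisj0 : interior ((0 : E) +ᵥ P) ∩ interior (l +ᵥ P) = ∅ := hdisj Λ.zero_mem hl hl0.symm
  rw [zero_vadd] at hdisj0
  exact eq_empty_iff_forall_notMem.mp hdisj0 _ ⟨hm, hm'⟩

theorem gauge_ne_one_of_sub_eq_two_smul {P : Set E} (hconv : Convex ℝ P)
    (hsymm : ∀ x ∈ P, -x ∈ P) (h0 : P ∈ 𝓝 0) {Λ : AddSubgroup E}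
    (hdisj : (Λ : Set E).Pairwise fun a b => interior (a +ᵥ P) ∩ interior (b +ᵥ P) = ∅)
    {g x y l l' μ : E} (hx : (2 : ℝ) • x - l ∈ interiorAlong P g)
    (hy : (2 : ℝ) • y - l' ∈ interiorAlong P g) (hμ : μ ∈ Λ) (hl : l - l' = (2 : ℝ) • μ) :
    gauge P (x - y) ≠ 1 := by
  intro hxy
  set v := ((2 : ℝ) • x - l) - ((2 : ℝ) • y - l')
  have hv : gauge P v < 2 := gauge_sub_lt_two_of_mem_interiorAlong hconv hsymm h0 hx hy
  have hsum : (2 : ℝ) • μ + v = (2 : ℝ) • (x - y) := by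
    rw [← hl]
    module
  have h2 : gauge P ((2 : ℝ) • μ + v) = 2 := by
    rw [hsum, gauge_smul_of_nonneg zero_le_two, hxy, smul_eq_mul, mul_one]
  rcases eq_or_ne μ 0 with rfl | hμ0
  · rw [smul_zero, zero_add] at h2
    linarith
  · have h4 := two_le_gauge_of_mem_of_ne_zero hconv hsymm h0 hdisj hμ hμ0
    have : gauge P ((2 : ℝ) • μ) ≤ gauge P ((2 : ℝ) • μ + v) + gauge P v := by
      rw [← gauge_neg hsymm v]
      simpa using gauge_add_le hconv (absorbent_nhds_zero h0) ((2 : ℝ) • μ + v) (-v)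
    rw [gauge_smul_of_nonneg zero_le_two, smul_eq_mul, h2] at this
    linarith

end ConvexBody

theorem Module.Basis.exists_sub_eq_two_smul_of_repr_cast_eq {ι M : Type*} [Fintype ι]
    [AddCommGroup M] (b : Basis ι ℤ M) {x y : M} (h : ∀ i, (b.repr x i : ZMod 2) = b.repr y i) :
    ∃ μ, x - y = 2 • μ := by
  have hdvd (i : ι) : (2 : ℤ) ∣ b.repr x i - b.repr y i := by
    exact_mod_cast (ZMod.intCast_eq_intCast_iff_dvd_sub _ _ 2).mp (h i).symm
  choose m hm using hdvd
  refine ⟨b.equivFun.symm m, b.equivFun.injective ?_⟩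
  rw [map_nsmul, LinearEquiv.apply_symm_apply]
  ext i
  simp [hm]

theorem chromatic_number_parallelohedron_le (n : ℕ) (P : Set (Fin n → ℝ))
    (hP : IsSymmPolytope n P)
    (b : Module.Basis (Fin n) ℝ (Fin n → ℝ)) (Λ : AddSubgroup (Fin n → ℝ))
    (hΛ : Λ = AddSubgroup.closure (Set.range b))
    (htile : TilesBy n P (Λ : Set (Fin n → ℝ))) :
    ∃ c : (Fin n → ℝ) → Fin (2 ^ n),
      ∀ x y : Fin n → ℝ, polyNorm n P (x - y) = 1 → c x ≠ c y := by
  obtain ⟨-, hsymm, F, rfl⟩ := hP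
  obtain ⟨hcover, hdisj⟩ := htile
  obtain rfl : Λ = (Submodule.span ℤ (range b)).toAddSubgroup :=
    hΛ.trans (Submodule.span_int_eq_addSubgroupClosure _).symm
  have hF := F.finite_toSet
  have hconv := convex_convexHull ℝ (F : Set (Fin n → ℝ))
  have h0 : (0 : Fin n → ℝ) ∈ interior (convexHull ℝ ↑F) :=
    zero_mem_interior_of_iUnion_vadd_eq_univ hconv hsymm
      (hF.isCompact_convexHull (𝕜 := ℝ)).isClosed
      (countable_coe_iff.mp (inferInstanceAs (Countable (Submodule.span ℤ (range b))))) hcover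
  obtain ⟨g, hg⟩ := exists_isGenericDirection hF
  choose R hRΛ hRD using hg.exists_sub_mem_interiorAlong hF ⟨0, h0⟩ hcover
  let bℤ := b.restrictScalars ℤ
  let parity (w : Fin n → ℝ) (i : Fin n) : ZMod 2 := bℤ.repr ⟨R w, hRΛ w⟩ i
  let e := Fintype.equivFinOfCardEq (by simp : Fintype.card (Fin n → ZMod 2) = 2 ^ n)
  refine ⟨fun x => e (parity ((2 : ℝ) • x)), fun x y hxy hc => ?_⟩
  obtain ⟨μ, hμ⟩ := bℤ.exists_sub_eq_two_smul_of_repr_cast_eq (congrFun (e.injective hc))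
  rw [polyNorm_eq_gauge (interior_subset h0)] at hxy
  refine gauge_ne_one_of_sub_eq_two_smul hconv hsymm (mem_interior_iff_mem_nhds.mp h0) hdisj
    (hRD _) (hRD _) μ.2 ?_ hxy
  simpa [two_smul] using congrArg Subtype.val hμ
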